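/- arXiv:gr-qc/0010032 — 6 statements merged into one kernel-verified Lean document; each statement's English description precedes it below -/
import Mathlib

section
/- Let F ∈ C²[0,∞) satisfy F(0) = 1/2, F'(x) ≤ 0, F''(x) ≥ 0, and x²F''(x) + 2xF'(x) - 2F(x) + 1 ≥ 0 for all x > 0. Then the limit of F(x)/x as x → ∞ exists (and is finite); moreover it equals l/3, where l = lim_{x→∞} (F'(x) + (2F(x)-1)/x). -/
/-!
Since `F'' ≥ 0`, the derivative `F'` is nondecreasing on `[0, ∞)`, and it is bounded above by `0`,
so it converges to some `m`. A function whose derivative tends to `m` is `m x + o(x)` by the mean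
value inequality, so `F x / x → m` as well, and then `F' x + (2 F x - 1) / x → 3 m`.
-/

open Filter Topology Set Asymptotics

lemma MonotoneOn.exists_tendsto_atTop_of_le {α β : Type*} [LinearOrder α]
    [ConditionallyCompleteLinearOrder β] [TopologicalSpace β] [OrderTopology β] {f : α → β}
    {a : α} {C : β} (hf : MonotoneOn f (Ici a))
    (hC : ∀ x ≥ a, f x ≤ C) : ∃ m, Tendsto f atTop (𝓝 m) := by
  have hmono : Monotone fun x => f (max x a) := fun x y hxy =>
    hf (le_max_right x a) (le_max_right y a) (max_le_max_right a hxy)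
  have hbdd : BddAbove (range fun x => f (max x a)) := by
    refine ⟨C, ?_⟩
    rintro _ ⟨x, rfl⟩
    exact hC _ (le_max_right x a)
  refine ⟨_, (tendsto_atTop_ciSup hmono hbdd).congr' ?_⟩
  filter_upwards [eventually_ge_atTop a] with x hx
  rw [max_eq_left hx]

lemma isLittleO_id_atTop_of_tendsto_deriv_zero {E : Type*} [NormedAddCommGroup E]
    [NormedSpace ℝ E] {f : ℝ → E} (hf : ∀ᶠ x in atTop, DifferentiableAt ℝ f x)
    (h : Tendsto (deriv f) atTop (𝓝 0)) : f =o[atTop] id := by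
  refine isLittleO_iff.mpr fun ε hε => ?_
  have hsmall : ∀ᶠ x in atTop, (DifferentiableAt ℝ f x ∧ ‖deriv f x‖ ≤ ε / 2) ∧ 0 ≤ x :=
    (hf.and (h.norm.eventually (ge_mem_nhds (by simpa using half_pos hε)))).and
      (eventually_ge_atTop 0)
  obtain ⟨x₀, hgood⟩ := eventually_atTop.mp hsmall
  have hlip : ∀ x ≥ x₀, ‖f x - f x₀‖ ≤ ε / 2 * (x - x₀) := fun x hx =>
    norm_image_sub_le_of_norm_deriv_le_segment'
      (fun t ht => (hgood t ht.1).1.1.hasDerivAt.hasDerivWithinAt)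
      (fun t ht => (hgood t ht.1).1.2) x ⟨hx, le_rfl⟩
  filter_upwards [eventually_ge_atTop x₀, eventually_ge_atTop (2 * ‖f x₀‖ / ε + x₀)]
    with x hxx₀ hx
  have hfx₀ : 2 * ‖f x₀‖ ≤ ε * (x - x₀) := (div_le_iff₀' hε).mp (by linarith)
  have hx₀ : 0 ≤ x₀ := (hgood x₀ le_rfl).2
  calc ‖f x‖ ≤ ‖f x₀‖ + ‖f x - f x₀‖ := norm_le_insert' _ _
    _ ≤ ε * ‖id x‖ := by
      rw [id, Real.norm_of_nonneg (hx₀.trans hxx₀)]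
      nlinarith [hlip x hxx₀, mul_nonneg hε.le hx₀]

lemma tendsto_div_atTop_of_tendsto_deriv {f : ℝ → ℝ} {L : ℝ}
    (hf : ∀ᶠ x in atTop, DifferentiableAt ℝ f x) (h : Tendsto (deriv f) atTop (𝓝 L)) :
    Tendsto (fun x => f x / x) atTop (𝓝 L) := by
  have hg : ∀ᶠ x in atTop, HasDerivAt (fun x => f x - x * L) (deriv f x - L) x := by
    filter_upwards [hf] with x hx
    exact hx.hasDerivAt.sub (hasDerivAt_mul_const L)
  have hlo : (fun x => f x - x * L) =o[atTop] id := by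
    refine isLittleO_id_atTop_of_tendsto_deriv_zero (hg.mono fun x hx => hx.differentiableAt) ?_
    refine (tendsto_sub_nhds_zero_iff.mpr h).congr' ?_
    filter_upwards [hg] with x hx using hx.deriv.symm
  have hlim := hlo.tendsto_div_nhds_zero.add_const L
  rw [zero_add] at hlim
  refine hlim.congr' ?_
  filter_upwards [eventually_ne_atTop 0] with x hx
  simp only [id]
  field_simp
  ring

theorem stmt_4_general (F : ℝ → ℝ) (hF : ContDiff ℝ 2 F)
    (hF' : ∀ x ≥ (0:ℝ), deriv F x ≤ 0)
    (hF'' : ∀ x ≥ (0:ℝ), deriv (deriv F) x ≥ 0) :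
    ∃ l : ℝ, Filter.Tendsto (fun x => deriv F x + (2*F x - 1)/x)
        Filter.atTop (nhds l) ∧
      Filter.Tendsto (fun x => F x / x) Filter.atTop (nhds (l/3)) := by
  have hdF : Differentiable ℝ (deriv F) :=
    (hF.iterate_deriv' 1 1).differentiable one_ne_zero
  have hmono : MonotoneOn (deriv F) (Ici 0) :=
    monotoneOn_of_deriv_nonneg (convex_Ici 0) hdF.continuous.continuousOn hdF.differentiableOn
      fun x hx => hF'' x (interior_subset hx)
  obtain ⟨m, hm⟩ := hmono.exists_tendsto_atTop_of_le hF'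
  have hFx : Tendsto (fun x => F x / x) atTop (𝓝 m) :=
    tendsto_div_atTop_of_tendsto_deriv (.of_forall (hF.differentiable (by norm_num))) hm
  refine ⟨3 * m, ?_, by rwa [mul_div_cancel_left₀ m three_ne_zero]⟩
  have hlim := hm.add ((hFx.const_mul 2).sub tendsto_inv_atTop_zero)
  rw [show m + (2 * m - 0) = 3 * m by ring] at hlim
  refine hlim.congr' ?_
  filter_upwards [eventually_ne_atTop 0] with x hx
  field_simp

theorem stmt_4 (F : ℝ → ℝ) (hF : ContDiff ℝ 2 F) (h0 : F 0 = 1/2)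
    (hF' : ∀ x ≥ (0:ℝ), deriv F x ≤ 0)
    (hF'' : ∀ x ≥ (0:ℝ), deriv (deriv F) x ≥ 0)
    (hsec : ∀ x > (0:ℝ),
      x^2 * deriv (deriv F) x + 2*x*deriv F x - 2*F x + 1 ≥ 0) :
    ∃ l : ℝ, Filter.Tendsto (fun x => deriv F x + (2*F x - 1)/x)
        Filter.atTop (nhds l) ∧
      Filter.Tendsto (fun x => F x / x) Filter.atTop (nhds (l/3)) :=
  stmt_4_general F hF hF' hF''
end

section
/- Let 𝓕 be the set of F ∈ C²[0,∞) with F(0)=1/2 satisfying the strong and dominant energy conditions (F' ≤ 0, F'' ≥ 0, x²F''+2xF'-2F+1 ≥ 0, 2xF'-2F+1 ≥ 0, -x²F''+2xF'-2F+1 ≥ 0 for all x ≥ 0), equipped with the norm ‖F‖ = sup_{[0,2)}|F| + sup_{[2,∞)}|F/x|. Define 𝓕_{NS1} = {F ∈ 𝓕 : ∃ x₀ > 0 and x₁ > x₀ with F(x₀) = 1/x₀ and F(x₁) > 1/x₁}. Then 𝓕_{NS1} is open in 𝓕. -/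
def MemF (F : ℝ → ℝ) : Prop :=
  ContDiff ℝ 2 F ∧ F 0 = 1/2 ∧
  (∀ x ≥ (0:ℝ), deriv F x ≤ 0) ∧
  (∀ x ≥ (0:ℝ), deriv (deriv F) x ≥ 0) ∧
  (∀ x ≥ (0:ℝ), x^2 * deriv (deriv F) x + 2*x*deriv F x - 2*F x + 1 ≥ 0) ∧
  (∀ x ≥ (0:ℝ), 2*x*deriv F x - 2*F x + 1 ≥ 0) ∧
  (∀ x ≥ (0:ℝ), -(x^2 * deriv (deriv F) x) + 2*x*deriv F x - 2*F x + 1 ≥ 0)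

noncomputable def Fnorm (F : ℝ → ℝ) : ℝ :=
  sSup ((fun x => |F x|) '' Set.Ico (0:ℝ) 2) +
  sSup ((fun x => |F x / x|) '' Set.Ici (2:ℝ))

def NS1 (F : ℝ → ℝ) : Prop :=
  ∃ x₀ > (0:ℝ), ∃ x₁ > x₀, F x₀ = 1/x₀ ∧ F x₁ > 1/x₁

def CEN (F : ℝ → ℝ) : Prop := ∀ x > (0:ℝ), F x < 1/x

def CEN1 (F : ℝ → ℝ) : Prop :=
  CEN F ∧ ∃ xH > (0:ℝ), F xH = 0 ∧ ∀ x > xH, F x < 0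

/-! A member `F` of `𝓕` is nonincreasing from `F 0 = 1/2` and convex, so `F ≤ 1/2` and `F` lies
above its tangent line at `0`; hence `F x / x` is bounded on `[2, ∞)` and the second part of the
norm controls `|F x₁ - G x₁| / x₁`. If `F x₁ > 1/x₁`, a norm-close `G ∈ 𝓕` still satisfies
`G x₁ > 1/x₁`, while `G 1 ≤ 1/2 < 1`, so `G` crosses `1/x` somewhere in `[1, x₁)`. -/

open Set

namespace MemF

variable {F : ℝ → ℝ}

lemma antitoneOn (hF : MemF F) : AntitoneOn F (Ici 0) :=
  antitoneOn_of_deriv_nonpos (convex_Ici 0) hF.1.continuous.continuousOn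
    (hF.1.differentiable (by norm_num)).differentiableOn
    fun x hx => hF.2.2.1 x (interior_subset hx)

lemma le_half (hF : MemF F) {x : ℝ} (hx : 0 ≤ x) : F x ≤ 1 / 2 :=
  hF.2.1 ▸ hF.antitoneOn self_mem_Ici hx hx

lemma convexOn (hF : MemF F) : ConvexOn ℝ (Ici 0) F := by
  have hF' : ContDiff ℝ 1 (deriv F) := hF.1.iterate_deriv' 1 1
  refine convexOn_of_deriv2_nonneg (convex_Ici 0) hF.1.continuous.continuousOn
    (hF.1.differentiable (by norm_num)).differentiableOn
    (hF'.differentiable one_ne_zero).differentiableOn fun x hx => ?_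
  simpa using hF.2.2.2.1 x (interior_subset hx)

lemma deriv_zero_le_div (hF : MemF F) {x : ℝ} (hx : 0 < x) : deriv F 0 ≤ F x / x := by
  have hslope : deriv F 0 ≤ slope F 0 x :=
    hF.convexOn.deriv_le_slope self_mem_Ici hx.le hx
      (hF.1.differentiable (by norm_num) 0)
  have hF0 : slope F 0 x ≤ F x / x := by
    rw [slope_def_field, sub_zero, hF.2.1]
    gcongr
    norm_num
  exact hslope.trans hF0

lemma abs_div_le (hF : MemF F) {x : ℝ} (hx : 2 ≤ x) : |F x / x| ≤ 1 / 4 + |deriv F 0| := by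
  have hx0 : 0 < x := by linarith
  have hupper : F x / x ≤ 1 / 4 :=
    calc F x / x ≤ (1 / 2) / x := by gcongr; exact hF.le_half hx0.le
      _ ≤ 1 / 4 := by rw [div_le_iff₀ hx0]; linarith
  have hlower := hF.deriv_zero_le_div hx0
  rw [abs_le]
  constructor <;> linarith [neg_abs_le (deriv F 0), abs_nonneg (deriv F 0)]

lemma bddAbove_abs_sub_div {G : ℝ → ℝ} (hF : MemF F) (hG : MemF G) :
    BddAbove ((fun x => |(F x - G x) / x|) '' Ici 2) := by
  refine ⟨(1 / 4 + |deriv F 0|) + (1 / 4 + |deriv G 0|), ?_⟩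
  rintro _ ⟨x, hx, rfl⟩
  calc |(F x - G x) / x| = |F x / x - G x / x| := by rw [sub_div]
    _ ≤ |F x / x| + |G x / x| := abs_sub _ _
    _ ≤ _ := add_le_add (hF.abs_div_le hx) (hG.abs_div_le hx)

lemma two_lt_of_inv_lt (hF : MemF F) {x : ℝ} (hx : 0 < x) (hFx : 1 / x < F x) : 2 < x := by
  by_contra! h
  have : 1 / 2 ≤ 1 / x := one_div_le_one_div_of_le hx h
  linarith [hF.le_half hx.le]

end MemF

-- Boundedness matters: `sSup` of a set unbounded above is `0`.
lemma abs_div_le_Fnorm {H : ℝ → ℝ} (hH : BddAbove ((fun x => |H x / x|) '' Ici 2)) {x : ℝ}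
    (hx : 2 ≤ x) : |H x / x| ≤ Fnorm H := by
  have hnear : 0 ≤ sSup ((fun x => |H x|) '' Ico (0 : ℝ) 2) :=
    Real.sSup_nonneg <| by rintro _ ⟨y, _, rfl⟩; exact abs_nonneg _
  have hfar : |H x / x| ≤ sSup ((fun x => |H x / x|) '' Ici 2) :=
    le_csSup hH ⟨x, hx, rfl⟩
  unfold Fnorm
  linarith

lemma exists_mem_Ico_eq_inv {G : ℝ → ℝ} {a b : ℝ} (ha : 0 < a) (hab : a ≤ b)
    (hG : ContinuousOn G (Icc a b)) (hGa : G a ≤ 1 / a) (hGb : 1 / b < G b) :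
    ∃ c ∈ Ico a b, G c = 1 / c := by
  have hcont : ContinuousOn (fun x => G x - 1 / x) (Icc a b) :=
    hG.sub <| continuousOn_const.div continuousOn_id fun x hx => (ha.trans_le hx.1).ne'
  obtain ⟨c, hc, hc0⟩ : ∃ c ∈ Icc a b, G c - 1 / c = 0 :=
    intermediate_value_Icc hab hcont ⟨by linarith, by linarith⟩
  have hGc : G c = 1 / c := by linarith
  refine ⟨c, ⟨hc.1, lt_of_le_of_ne hc.2 ?_⟩, hGc⟩
  rintro rfl
  linarith

lemma MemF.nS1_of_inv_lt {G : ℝ → ℝ} (hG : MemF G) {x₁ : ℝ} (hx₁ : 0 < x₁)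
    (hGx₁ : 1 / x₁ < G x₁) : NS1 G := by
  have h2 := hG.two_lt_of_inv_lt hx₁ hGx₁
  obtain ⟨c, hc, hGc⟩ := exists_mem_Ico_eq_inv one_pos (by linarith : (1 : ℝ) ≤ x₁)
    hG.1.continuous.continuousOn (by linarith [hG.le_half zero_le_one]) hGx₁
  exact ⟨c, by linarith [hc.1], x₁, hc.2, hGc, hGx₁⟩

theorem stmt_8 (F : ℝ → ℝ) (hF : MemF F) (hNS : NS1 F) :
    ∃ ε > (0:ℝ), ∀ G : ℝ → ℝ, MemF G →
      Fnorm (fun x => F x - G x) < ε → NS1 G := by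
  obtain ⟨x₀, hx₀, x₁, hx₀₁, -, hFx₁⟩ := hNS
  have hx₁ : 0 < x₁ := hx₀.trans hx₀₁
  have h2x₁ := hF.two_lt_of_inv_lt hx₁ hFx₁
  refine ⟨(F x₁ - 1 / x₁) / x₁, div_pos (by linarith) hx₁, fun G hG hnorm => ?_⟩
  have hclose : (F x₁ - G x₁) / x₁ < (F x₁ - 1 / x₁) / x₁ :=
    (le_abs_self _).trans_lt <|
      (abs_div_le_Fnorm (hF.bddAbove_abs_sub_div hG) h2x₁.le).trans_lt hnorm
  have hGx₁ : 1 / x₁ < G x₁ := by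
    linarith [(div_lt_div_iff_of_pos_right hx₁).mp hclose]
  exact hG.nS1_of_inv_lt hx₁ hGx₁
end

section
/- Let F ∈ C²[0,∞) with F'(x) ≤ 0 and F''(x) ≥ 0 for all x ≥ 0. Fix x_i > 0 and suppose 0 < F(x_i) < 1/x_i. Set F_i = F(x_i), x₁ = (1 + √(1 - x_i F_i))/F_i. If |F'(x_i)| < F_i²/(1 + √(1 - x_i F_i))², then x₁ > x_i and F(x₁) > 1/x₁. -/
/-!
A convex function lies above each of its tangent lines, so on `[x_i, ∞)` the graph of `F` stays
above the line through `(x_i, F_i)` with slope `F'(x_i)`, and strictly above the less steep line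
through the same point with slope `-F_i² / (1 + √(1 - x_i F_i))² = -1/x₁²`. That line is tangent
to the hyperbola `y = 1/x` at `x₁`, hence `F(x₁) > 1/x₁`.
-/

open Set

theorem ContDiff.convexOn_Ici_of_deriv2_nonneg {f : ℝ → ℝ} {a : ℝ} (hf : ContDiff ℝ 2 f)
    (hf'' : ∀ x ≥ a, deriv (deriv f) x ≥ 0) : ConvexOn ℝ (Ici a) f :=
  convexOn_of_deriv2_nonneg' (convex_Ici a) (hf.differentiable two_ne_zero).differentiableOn
    hf.differentiable_deriv_two.differentiableOn hf''

theorem ConvexOn.sub_mul_sub_lt_of_neg_lt_deriv {S : Set ℝ} {f : ℝ → ℝ} {a b m : ℝ}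
    (hfc : ConvexOn ℝ S f) (ha : a ∈ S) (hb : b ∈ S) (hab : a < b)
    (hfd : DifferentiableAt ℝ f a) (hm : -m < deriv f a) :
    f a - m * (b - a) < f b := by
  have hslope : -m < slope f a b := hm.trans_le (hfc.deriv_le_slope ha hb hab hfd)
  rw [slope_def_field, lt_div_iff₀ (sub_pos.mpr hab)] at hslope
  linarith

/- The line through `(xi, Fi)` with slope `-1/x²` touches `y = 1/x` at `x` iff
`Fi x² - 2x + xi = 0`; `x₁` is the larger root, and `Fi² / (1 + √(1 - xi Fi))² = 1/x₁²`. -/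
theorem lt_hyperbola_tangency_point {xi Fi x₁ : ℝ} (hFi : 0 < Fi) (hlt : xi * Fi < 1)
    (hx₁ : x₁ = (1 + Real.sqrt (1 - xi * Fi)) / Fi) : xi < x₁ := by
  have hs : 0 ≤ Real.sqrt (1 - xi * Fi) := Real.sqrt_nonneg _
  rw [hx₁, lt_div_iff₀ hFi]
  linarith

theorem hyperbola_tangent_line_eq {xi Fi x₁ : ℝ} (hFi : 0 < Fi) (hlt : xi * Fi < 1)
    (hx₁ : x₁ = (1 + Real.sqrt (1 - xi * Fi)) / Fi) :
    Fi - Fi ^ 2 / (1 + Real.sqrt (1 - xi * Fi)) ^ 2 * (x₁ - xi) = 1 / x₁ := by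
  have hs2 : Real.sqrt (1 - xi * Fi) ^ 2 = 1 - xi * Fi := Real.sq_sqrt (by linarith)
  have hs : 0 ≤ Real.sqrt (1 - xi * Fi) := Real.sqrt_nonneg _
  generalize Real.sqrt (1 - xi * Fi) = s at hs2 hs hx₁ ⊢
  subst hx₁
  field_simp
  linear_combination hs2

theorem stmt_13_general (F : ℝ → ℝ) (hF : ContDiff ℝ 2 F)
    (hF'' : ∀ x ≥ (0:ℝ), deriv (deriv F) x ≥ 0)
    (xi : ℝ) (hxi : 0 < xi) (hFi : 0 < F xi) (hFi' : F xi < 1/xi)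
    (x₁ : ℝ) (hx₁ : x₁ = (1 + Real.sqrt (1 - xi * F xi)) / F xi)
    (hslope : |deriv F xi| < (F xi)^2 / (1 + Real.sqrt (1 - xi * F xi))^2) :
    x₁ > xi ∧ F x₁ > 1/x₁ := by
  have hlt : xi * F xi < 1 := by
    rw [lt_div_iff₀ hxi] at hFi'
    linarith
  have hxi_lt : xi < x₁ := lt_hyperbola_tangency_point hFi hlt hx₁
  refine ⟨hxi_lt, ?_⟩
  rw [gt_iff_lt, ← hyperbola_tangent_line_eq hFi hlt hx₁]
  exact (hF.convexOn_Ici_of_deriv2_nonneg hF'').sub_mul_sub_lt_of_neg_lt_deriv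
    hxi.le (hxi.trans hxi_lt).le hxi_lt (hF.differentiable two_ne_zero xi)
    (neg_lt_of_abs_lt hslope)

theorem stmt_13 (F : ℝ → ℝ) (hF : ContDiff ℝ 2 F)
    (hF' : ∀ x ≥ (0:ℝ), deriv F x ≤ 0)
    (hF'' : ∀ x ≥ (0:ℝ), deriv (deriv F) x ≥ 0)
    (xi : ℝ) (hxi : 0 < xi) (hFi : 0 < F xi) (hFi' : F xi < 1/xi)
    (x₁ : ℝ) (hx₁ : x₁ = (1 + Real.sqrt (1 - xi * F xi)) / F xi)
    (hslope : |deriv F xi| < (F xi)^2 / (1 + Real.sqrt (1 - xi * F xi))^2) :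
    x₁ > xi ∧ F x₁ > 1/x₁ :=
  stmt_13_general F hF hF'' xi hxi hFi hFi' x₁ hx₁ hslope
end

section
/- Let F ∈ C²[0,∞) satisfy for all x > 0: F'(x) ≤ 0, 2xF'(x) - 2F(x) + 1 ≥ 0, and -x²F''(x) + 2xF'(x) - 2F(x) + 1 ≥ 0. Then the function g(x) := F'(x) + (1 - 2F(x))/x is nonincreasing and nonnegative on (0,∞). -/
/-! Write `g x = F' x + (1 - 2 F x) / x`. A direct computation gives
`g' x = -(-x² F'' x + 2 x F' x - 2 F x + 1) / x²`, so the DEC inequality is exactly `g' ≤ 0`.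
Likewise `x g x = (2 x F' x - 2 F x + 1) - x F' x`, which is nonnegative by the WEC inequality
and `F' ≤ 0`. -/

theorem hasDerivAt_deriv_add_one_sub_two_mul_div {F : ℝ → ℝ} {x : ℝ}
    (hF : DifferentiableAt ℝ F x) (hF' : DifferentiableAt ℝ (deriv F) x) (hx : x ≠ 0) :
    HasDerivAt (fun y => deriv F y + (1 - 2 * F y) / y)
      (-(-(x ^ 2 * deriv (deriv F) x) + 2 * x * deriv F x - 2 * F x + 1) / x ^ 2) x := by
  refine (hF'.hasDerivAt.add
    (((hF.hasDerivAt.const_mul 2).const_sub 1).div (hasDerivAt_id x) hx)).congr_deriv ?_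
  simp only [id]
  field_simp
  ring

theorem antitoneOn_deriv_add_one_sub_two_mul_div {F : ℝ → ℝ} (hF : ContDiff ℝ 2 F)
    (hdec : ∀ x > (0:ℝ), -(x ^ 2 * deriv (deriv F) x) + 2 * x * deriv F x - 2 * F x + 1 ≥ 0) :
    AntitoneOn (fun x => deriv F x + (1 - 2 * F x) / x) (Set.Ioi 0) := by
  have hg : ∀ x ∈ Set.Ioi (0:ℝ), HasDerivAt (fun y => deriv F y + (1 - 2 * F y) / y)
      (-(-(x ^ 2 * deriv (deriv F) x) + 2 * x * deriv F x - 2 * F x + 1) / x ^ 2) x :=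
    fun x hx => hasDerivAt_deriv_add_one_sub_two_mul_div (hF.differentiable two_ne_zero x)
      (hF.differentiable_deriv_two x) (ne_of_gt hx)
  refine antitoneOn_of_hasDerivWithinAt_nonpos (convex_Ioi 0)
    (f' := fun x => -(-(x ^ 2 * deriv (deriv F) x) + 2 * x * deriv F x - 2 * F x + 1) / x ^ 2)
    (fun x hx => (hg x hx).continuousAt.continuousWithinAt) ?_ ?_ <;> rw [interior_Ioi]
  · exact fun x hx => (hg x hx).hasDerivWithinAt
  · exact fun x hx => div_nonpos_of_nonpos_of_nonneg (neg_nonpos.mpr (hdec x hx)) (sq_nonneg x)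

theorem add_one_sub_two_mul_div_nonneg {x d a : ℝ} (hx : 0 < x) (hd : d ≤ 0)
    (hwec : 2 * x * d - 2 * a + 1 ≥ 0) : d + (1 - 2 * a) / x ≥ 0 := by
  have hxg : d + (1 - 2 * a) / x = ((2 * x * d - 2 * a + 1) - x * d) / x := by
    field_simp
    ring
  rw [hxg]
  exact div_nonneg (by nlinarith) hx.le

theorem stmt_15 (F : ℝ → ℝ) (hF : ContDiff ℝ 2 F)
    (hF' : ∀ x > (0:ℝ), deriv F x ≤ 0)
    (hwec : ∀ x > (0:ℝ), 2*x*deriv F x - 2*F x + 1 ≥ 0)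
    (hdec : ∀ x > (0:ℝ),
      -(x^2 * deriv (deriv F) x) + 2*x*deriv F x - 2*F x + 1 ≥ 0) :
    AntitoneOn (fun x => deriv F x + (1 - 2*F x)/x) (Set.Ioi (0:ℝ)) ∧
    ∀ x > (0:ℝ), deriv F x + (1 - 2*F x)/x ≥ 0 :=
  ⟨antitoneOn_deriv_add_one_sub_two_mul_div hF hdec,
    fun x hx => add_one_sub_two_mul_div_nonneg hx (hF' x hx) (hwec x hx)⟩
end

section
/- Let F ∈ C²[0,∞) satisfy g(x) := F'(x) + (1-2F(x))/x nonincreasing and nonnegative on (0,∞). Fix x_i > 0 and set F_i = F(x_i), F'_i = F'(x_i). Then for all x ≥ x_i: F(x) ≤ h(x) := (F'_i + (1-2F_i)/(2x_i))·x²/x_i - (F'_i + (1-2F_i)/x_i)·x + 1/2. -/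
/-!
The substitution `H(x) = (F(x) - 1/2)/x²` is an integrating factor for the linear ODE:
`H' = g/x²` with `g = F' + (1 - 2F)/x`. Since `g` is nonincreasing, `g ≤ g(xᵢ)` on `[xᵢ, ∞)`,
so `H(x) + g(xᵢ)/x` is nonincreasing there; comparing its values at `x` and `xᵢ` and multiplying
by `x²` gives the quadratic bound.
-/

open Set

lemma hasDerivAt_sub_half_div_sq {F : ℝ → ℝ} {x : ℝ} (hF : DifferentiableAt ℝ F x) (hx : x ≠ 0) :
    HasDerivAt (fun y => (F y - 1/2) / y^2) ((deriv F x + (1 - 2*F x)/x) / x^2) x := by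
  refine ((hF.hasDerivAt.sub_const (1/2)).div (hasDerivAt_pow 2 x) (pow_ne_zero 2 hx)).congr_deriv ?_
  field_simp
  ring

lemma antitoneOn_sub_half_div_sq_add_div {F : ℝ → ℝ} {a c : ℝ} (ha : 0 < a)
    (hF : DifferentiableOn ℝ F (Ici a))
    (hg : ∀ x ∈ Ioi a, deriv F x + (1 - 2*F x)/x ≤ c) :
    AntitoneOn (fun x => (F x - 1/2) / x^2 + c / x) (Ici a) := by
  have hne : ∀ x ∈ Ici a, x ≠ 0 := fun x hx => (ha.trans_le hx).ne'
  have hderiv : ∀ x ∈ Ioi a, HasDerivAt (fun x => (F x - 1/2) / x^2 + c / x)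
      ((deriv F x + (1 - 2*F x)/x - c) / x^2) x := by
    intro x hx
    have hx0 := hne x (Ioi_subset_Ici_self hx)
    refine ((hasDerivAt_sub_half_div_sq (hF.differentiableAt (Ici_mem_nhds hx)) hx0).add
      ((hasDerivAt_inv hx0).const_mul c)).congr_deriv ?_
    field_simp
    ring
  apply antitoneOn_of_deriv_nonpos (convex_Ici a)
  · exact ((hF.continuousOn.sub continuousOn_const).div (continuousOn_pow 2)
      fun x hx => pow_ne_zero 2 (hne x hx)).add (continuousOn_const.div continuousOn_id hne)
  · rw [interior_Ici]
    exact fun x hx => (hderiv x hx).differentiableAt.differentiableWithinAt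
  · rw [interior_Ici]
    intro x hx
    rw [(hderiv x hx).deriv]
    exact div_nonpos_of_nonpos_of_nonneg (sub_nonpos.mpr (hg x hx)) (sq_nonneg x)

theorem stmt_16_general (F : ℝ → ℝ) (hF : ContDiff ℝ 2 F)
    (hg_anti : AntitoneOn (fun x => deriv F x + (1 - 2*F x)/x) (Set.Ioi (0:ℝ)))
    (xi : ℝ) (hxi : 0 < xi) :
    ∀ x ≥ xi, F x ≤
      (deriv F xi + (1 - 2*F xi)/(2*xi)) * x^2/xi
        - (deriv F xi + (1 - 2*F xi)/xi) * x + 1/2 := by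
  intro x hx
  have hx0 : 0 < x := hxi.trans_le hx
  have hanti := antitoneOn_sub_half_div_sq_add_div hxi
    (hF.differentiable (by norm_num)).differentiableOn
    fun y hy => hg_anti hxi (hxi.trans hy) hy.le
  rw [← sub_nonneg]
  refine (mul_nonneg (sub_nonneg.mpr (hanti self_mem_Ici hx hx)) (sq_nonneg x)).trans_eq ?_
  field_simp
  ring

theorem stmt_16 (F : ℝ → ℝ) (hF : ContDiff ℝ 2 F)
    (hg_anti : AntitoneOn (fun x => deriv F x + (1 - 2*F x)/x) (Set.Ioi (0:ℝ)))
    (hg_nonneg : ∀ x > (0:ℝ), deriv F x + (1 - 2*F x)/x ≥ 0)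
    (xi : ℝ) (hxi : 0 < xi) :
    ∀ x ≥ xi, F x ≤
      (deriv F xi + (1 - 2*F xi)/(2*xi)) * x^2/xi
        - (deriv F xi + (1 - 2*F xi)/xi) * x + 1/2 :=
  stmt_16_general F hF hg_anti xi hxi
end

section
/- Let F ∈ C²[0,∞) satisfy the energy conditions F' ≤ 0, 2xF' - 2F + 1 ≥ 0, and -x²F'' + 2xF' - 2F + 1 ≥ 0 on (0,∞). Suppose 0 < x_i < 1, F_i := F(x_i) > 0, and |F'(x_i)| > max{1/(4x_i), F_i/x_i}. Then F(x) < 1/x for all x ∈ [x_i, 2x_i], and F(2x_i) < 0; in particular there exists x₀ ∈ (x_i, 2x_i] with F(x₀) = 0 and F(x) < 1/x on [x_i, x₀]. -/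
/-!
The dominant energy condition says `x² g'' - 2x g' + 2g ≥ 0` for `g = h - F`, where `h` is the
quadratic `β x² + α x + 1/2` (the general solution of `-x² h'' + 2x h' - 2h + 1 = 0`) with the same
value and slope as `F` at `xᵢ`. The kernel of this Euler operator is spanned by `x` and `x²`, and
integrating twice against it gives `F ≤ h` beyond `xᵢ`. The cubic `u = x h - 1` has leading
coefficient `β ≥ 0` by the weak energy condition at `xᵢ`, so `u'` is convex; with `u(xᵢ) < 0`,
`u'(xᵢ) < 0` and `u(2xᵢ) < 0` this keeps `u < 0` on `[xᵢ, 2xᵢ]`. Finally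
`h(2xᵢ) = 2xᵢ F'(xᵢ) + 1/2 < 0`, and the zero `x₀` comes from the intermediate value theorem.
-/

open Set

lemma nonneg_of_hasDerivAt_nonneg {f f' : ℝ → ℝ} {a : ℝ}
    (hf : ∀ x ≥ a, HasDerivAt f (f' x) x) (hf' : ∀ x > a, 0 ≤ f' x) (ha : 0 ≤ f a) :
    ∀ x ≥ a, 0 ≤ f x := by
  have hmono : MonotoneOn f (Ici a) :=
    monotoneOn_of_hasDerivWithinAt_nonneg (convex_Ici a)
      (fun x hx => (hf x hx).continuousAt.continuousWithinAt)
      (fun x hx => by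
        rw [interior_Ici] at hx ⊢
        exact (hf x hx.le).hasDerivWithinAt)
      (fun x hx => by
        rw [interior_Ici] at hx
        exact hf' x hx)
  exact fun x hx => ha.trans (hmono self_mem_Ici hx hx)

lemma nonneg_of_euler_nonneg {g g' g'' : ℝ → ℝ} {x₀ : ℝ} (hx₀ : 0 < x₀)
    (hg : ∀ x ≥ x₀, HasDerivAt g (g' x) x) (hg' : ∀ x ≥ x₀, HasDerivAt g' (g'' x) x)
    (h0 : 0 ≤ g x₀) (h1 : g x₀ ≤ x₀ * g' x₀)
    (hL : ∀ x > x₀, 0 ≤ x ^ 2 * g'' x - 2 * x * g' x + 2 * g x) :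
    ∀ x ≥ x₀, 0 ≤ g x := by
  -- `(g / x)' = (x g' - g) / x²` and `((x g' - g) / x²)' = (x² g'' - 2x g' + 2g) / x³`
  have hslope : ∀ x ≥ x₀, 0 ≤ (x * g' x - g x) / x ^ 2 := by
    refine nonneg_of_hasDerivAt_nonneg
      (f' := fun x => (x ^ 2 * g'' x - 2 * x * g' x + 2 * g x) / x ^ 3) (fun x hx => ?_)
      (fun x hx => div_nonneg (hL x hx) (pow_pos (hx₀.trans hx) 3).le)
      (div_nonneg (by linarith) (by positivity))
    have hx0 : x ≠ 0 := (hx₀.trans_le hx).ne'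
    refine ((((hasDerivAt_id' x).mul (hg' x hx)).sub (hg x hx)).div
      (hasDerivAt_pow 2 x) (pow_ne_zero 2 hx0)).congr_deriv ?_
    simp only [Pi.mul_apply, Pi.sub_apply]
    field_simp
    ring
  have hquot : ∀ x ≥ x₀, 0 ≤ g x / x := by
    refine nonneg_of_hasDerivAt_nonneg (f' := fun x => (x * g' x - g x) / x ^ 2)
      (fun x hx => ?_) (fun x hx => hslope x hx.le) (div_nonneg h0 hx₀.le)
    refine ((hg x hx).div (hasDerivAt_id x) (hx₀.trans_le hx).ne').congr_deriv ?_
    simp only [id_eq]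
    ring
  intro x hx
  have := mul_nonneg (hquot x hx) (hx₀.trans_le hx).le
  rwa [div_mul_cancel₀ _ (hx₀.trans_le hx).ne'] at this

lemma hasDerivAt_quadratic (α β γ x : ℝ) :
    HasDerivAt (fun x => β * x ^ 2 + α * x + γ) (2 * β * x + α) x := by
  refine ((((hasDerivAt_pow 2 x).const_mul β).add ((hasDerivAt_id' x).const_mul α)).add_const
    γ).congr_deriv ?_
  push_cast
  ring

lemma le_quadratic_of_dec {F : ℝ → ℝ} (hF : Differentiable ℝ F)
    (hF' : Differentiable ℝ (deriv F)) {x₀ α β : ℝ} (hx₀ : 0 < x₀)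
    (hdec : ∀ x > x₀, 0 ≤ -(x ^ 2 * deriv (deriv F) x) + 2 * x * deriv F x - 2 * F x + 1)
    (hval : β * x₀ ^ 2 + α * x₀ + 1 / 2 = F x₀) (hslope : 2 * β * x₀ + α = deriv F x₀) :
    ∀ x ≥ x₀, F x ≤ β * x ^ 2 + α * x + 1 / 2 := by
  have hlin : ∀ x, HasDerivAt (fun x => 2 * β * x + α) (2 * β) x := by
    intro x
    simpa using ((hasDerivAt_id x).const_mul (2 * β)).add_const α
  have := nonneg_of_euler_nonneg (g := fun x => β * x ^ 2 + α * x + 1 / 2 - F x)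
    (g' := fun x => 2 * β * x + α - deriv F x) (g'' := fun x => 2 * β - deriv (deriv F) x) hx₀
    (fun x _ => (hasDerivAt_quadratic α β _ x).sub (hF x).hasDerivAt)
    (fun x _ => (hlin x).sub (hF' x).hasDerivAt)
    (by simp only [← hval, sub_self, le_refl])
    (by simp only [← hval, ← hslope, sub_self, mul_zero, le_refl])
    (fun x hx => by linear_combination hdec x hx)
  exact fun x hx => sub_nonneg.mp (this x hx)

lemma neg_on_Icc_of_convexOn_deriv {u u' : ℝ → ℝ} {a b : ℝ}
    (hu : ∀ x ∈ Icc a b, HasDerivAt u (u' x) x) (hconv : ConvexOn ℝ (Icc a b) u')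
    (ha : u a < 0) (hb : u b < 0) (ha' : u' a ≤ 0) :
    ∀ x ∈ Icc a b, u x < 0 := by
  intro x hx
  by_contra! hux
  have hax : a < x := hx.1.lt_of_ne (by rintro rfl; linarith)
  have hxb : x < b := hx.2.lt_of_ne (by rintro rfl; linarith)
  have hcont : ContinuousOn u (Icc a b) := fun y hy => (hu y hy).continuousAt.continuousWithinAt
  obtain ⟨c₁, hc₁, hs₁⟩ := exists_hasDerivAt_eq_slope u u' hax
    (hcont.mono (Icc_subset_Icc_right hx.2))
    (fun y hy => hu y ⟨hy.1.le, hy.2.le.trans hx.2⟩)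
  obtain ⟨c₂, hc₂, hs₂⟩ := exists_hasDerivAt_eq_slope u u' hxb
    (hcont.mono (Icc_subset_Icc_left hx.1))
    (fun y hy => hu y ⟨hx.1.trans hy.1.le, hy.2.le⟩)
  -- `u` rises on `[a, x]` and falls on `[x, b]`, so `u'` goes `≤ 0`, `> 0`, `< 0`: not convex
  have hup : 0 < u' c₁ := by
    rw [hs₁]
    exact div_pos (by linarith) (by linarith [hc₁.2])
  have hdown : u' c₂ < 0 := by
    rw [hs₂]
    exact div_neg_of_neg_of_pos (by linarith) (by linarith [hc₂.1])
  have := hconv.le_max_of_mem_Icc (left_mem_Icc.mpr (hx.1.trans hx.2))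
    ⟨hx.1.trans hc₂.1.le, hc₂.2.le⟩ ⟨hc₁.1.le, hc₁.2.trans hc₂.1 |>.le⟩
  linarith [max_le ha' hdown.le]

lemma convexOn_quadratic {A B C : ℝ} (hA : 0 ≤ A) :
    ConvexOn ℝ univ (fun x : ℝ => A * x ^ 2 + B * x + C) := by
  refine ⟨convex_univ, fun x _ y _ s t hs ht hst => ?_⟩
  obtain rfl : t = 1 - s := by linarith
  simp only [smul_eq_mul]
  nlinarith [mul_nonneg (mul_nonneg hA hs) ht, sq_nonneg (x - y)]

theorem stmt_18 (F : ℝ → ℝ) (hF : ContDiff ℝ 2 F)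
    (hF' : ∀ x > (0:ℝ), deriv F x ≤ 0)
    (hwec : ∀ x > (0:ℝ), 2*x*deriv F x - 2*F x + 1 ≥ 0)
    (hdec : ∀ x > (0:ℝ),
      -(x^2 * deriv (deriv F) x) + 2*x*deriv F x - 2*F x + 1 ≥ 0)
    (xi : ℝ) (hxi0 : 0 < xi) (hxi1 : xi < 1)
    (hFi : 0 < F xi)
    (hbig : |deriv F xi| > max (1/(4*xi)) (F xi / xi)) :
    (∀ x ∈ Set.Icc xi (2*xi), F x < 1/x) ∧ F (2*xi) < 0 ∧
    ∃ x₀ ∈ Set.Ioc xi (2*xi), F x₀ = 0 ∧ ∀ x ∈ Set.Icc xi x₀, F x < 1/x := by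
  obtain ⟨hbig₁, hbig₂⟩ := max_lt_iff.mp hbig
  rw [abs_of_nonpos (hF' xi hxi0)] at hbig₁ hbig₂
  set p := F xi
  set q := deriv F xi
  have hq : xi * q < -(1 / 4) := by
    rw [div_lt_iff₀ (by positivity)] at hbig₁
    linarith
  have hqp : xi * q < -p := by
    rw [div_lt_iff₀ hxi0] at hbig₂
    linarith
  have hwec_i : 2 * xi * q - 2 * p + 1 ≥ 0 := hwec xi hxi0
  have hp : p < 1 / 4 := by linarith
  set β := (xi * q - p + 1 / 2) / xi ^ 2
  set α := (2 * p - 1 - xi * q) / xi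
  have hβ : β * xi ^ 2 = xi * q - p + 1 / 2 := div_mul_cancel₀ _ (by positivity)
  have hα : α * xi = 2 * p - 1 - xi * q := div_mul_cancel₀ _ hxi0.ne'
  have hβ₀ : 0 ≤ β := div_nonneg (by linarith) (by positivity)
  have hh_xi : β * xi ^ 2 + α * xi + 1 / 2 = p := by linear_combination hβ + hα
  have hh'_xi : 2 * β * xi + α = q :=
    mul_right_cancel₀ hxi0.ne' (by linear_combination 2 * hβ + hα)
  have hh_two : β * (2 * xi) ^ 2 + α * (2 * xi) + 1 / 2 = 2 * xi * q + 1 / 2 := by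
    linear_combination 4 * hβ + 2 * hα
  have hF_le : ∀ x ≥ xi, F x ≤ β * x ^ 2 + α * x + 1 / 2 :=
    le_quadratic_of_dec (hF.differentiable two_ne_zero) hF.differentiable_deriv_two hxi0
      (fun x hx => hdec x (hxi0.trans hx)) hh_xi hh'_xi
  have hu : ∀ x ∈ Icc xi (2 * xi), x * (β * x ^ 2 + α * x + 1 / 2) - 1 < 0 := by
    refine neg_on_Icc_of_convexOn_deriv (u' := fun x => 3 * β * x ^ 2 + 2 * α * x + 1 / 2)
      (fun x _ => ?_) ((convexOn_quadratic (mul_nonneg zero_le_three hβ₀)).subset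
        (subset_univ _) (convex_Icc _ _)) ?_ ?_ ?_
    · refine (((hasDerivAt_id' x).mul (hasDerivAt_quadratic α β (1 / 2) x)).sub_const
        1).congr_deriv ?_
      ring
    · show xi * (β * xi ^ 2 + α * xi + 1 / 2) - 1 < 0
      rw [hh_xi]
      nlinarith
    · show 2 * xi * (β * (2 * xi) ^ 2 + α * (2 * xi) + 1 / 2) - 1 < 0
      rw [hh_two]
      nlinarith
    · show 3 * β * xi ^ 2 + 2 * α * xi + 1 / 2 ≤ 0
      linarith
  have hF_hyp : ∀ x ∈ Icc xi (2 * xi), F x < 1 / x := by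
    intro x hx
    have hx0 : 0 < x := hxi0.trans_le hx.1
    rw [lt_div_iff₀ hx0]
    calc F x * x ≤ (β * x ^ 2 + α * x + 1 / 2) * x :=
          mul_le_mul_of_nonneg_right (hF_le x hx.1) hx0.le
      _ < 1 := by linarith [hu x hx]
  have hF_two : F (2 * xi) < 0 := by linarith [hF_le (2 * xi) (by linarith)]
  obtain ⟨x₀, hx₀, hFx₀⟩ := intermediate_value_Ioc' (show xi ≤ 2 * xi by linarith)
    hF.continuous.continuousOn ⟨hF_two.le, hFi⟩
  exact ⟨hF_hyp, hF_two, x₀, hx₀, hFx₀, fun x hx => hF_hyp x ⟨hx.1, hx.2.trans hx₀.2⟩⟩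
end
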